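/- arXiv:2111.01367 — 4 statements merged into one kernel-verified Lean document; each statement's English description precedes it below -/
import Mathlib

section
/- Let n, s, t, p be positive integers and n_1 ≥ n_2 ≥ … ≥ n_t ≥ p with n = n_1 + n_2 + … + n_t + s. If n_1 < n − s − p(t−1), then ρ(K_s ∇ (K_{n_1} ∪ K_{n_2} ∪ ⋯ ∪ K_{n_t})) < ρ(K_s ∇ (K_{n−s−p(t−1)} ∪ (t−1)K_p)). -/
/-!
Let `ρ` be the spectral radius of `K_s ∇ (K_{m_1} ∪ ⋯ ∪ K_{m_t})` and `a = ρ + 1`; the cliques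
`K_{s + m_i}` give `a > max m_i`. Summing the eigenvector equation over `K_s` and over each clique
shows that `a` is a root of the secular function `s ∑ m_i / (a - m_i) + s - a`. Conversely, if the
secular function is positive at some `a > max m_i`, the test vector equal to `1` on `K_s` and to
`s / (a - m_i)` on the `i`-th clique has Rayleigh quotient above `a - 1`.

Since `x ↦ x / (a - x)` is convex on `[0, a)`, moving mass from the smaller cliques into the
largest one without changing the total increases `∑ m_i / (a - m_i)`. So for
`N = n - s - p (t - 1)` the secular function of `(N, p, …, p)` is positive at `ρ + 1` when
`ρ + 1 > N`; otherwise the clique `K_{s + N}` already pushes the second spectral radius up to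
`s + N - 1 > ρ`.
-/

open SimpleGraph Matrix

/-- The spectral radius (largest adjacency eigenvalue) of a finite simple graph. -/
noncomputable def specRad {V : Type*} [Fintype V] (G : SimpleGraph V) : ℝ :=
  letI : DecidableRel G.Adj := Classical.decRel _
  sSup {μ : ℝ | ∃ x : V → ℝ, x ≠ 0 ∧ G.adjMatrix ℝ *ᵥ x = μ • x}

/-- `joinCliques s t m` is `K_s ∇ (K_{m 0} ∪ K_{m 1} ∪ ⋯ ∪ K_{m (t-1)})`. -/
def joinCliques (s t : ℕ) (m : Fin t → ℕ) :
    SimpleGraph (Fin s ⊕ (Σ i : Fin t, Fin (m i))) where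
  Adj x y := x ≠ y ∧ ∀ p q, x = Sum.inr p → y = Sum.inr q → p.1 = q.1
  symm := ⟨fun x y ⟨h1, h2⟩ => ⟨Ne.symm h1, fun p q hy hx => (h2 q p hx hy).symm⟩⟩
  loopless := ⟨fun x ⟨h1, _⟩ => h1 rfl⟩

open Finset

theorem Fin.sum_ite_val_eq_zero {M : Type*} [AddCommMonoid M] {t : ℕ} (ht : 1 ≤ t) (a b : M) :
    ∑ i : Fin t, (if i.val = 0 then a else b) = a + (t - 1) • b := by
  obtain ⟨t, rfl⟩ := Nat.exists_eq_add_of_le' ht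
  simp [Fin.sum_univ_succ]

theorem sum_div_sub_lt_sum_div_sub {ι : Type*} [Fintype ι] {m m' : ι → ℝ} {i₀ : ι} {a p : ℝ}
    (hp₀ : 0 ≤ p) (hm' : ∀ i ≠ i₀, m' i = p) (hp : ∀ i, p ≤ m i) (hmax : ∀ i, m i ≤ m i₀)
    (hlt : m i₀ < m' i₀) (ha : m' i₀ < a) (hsum : ∑ i, m i = ∑ i, m' i) :
    ∑ i, m i / (a - m i) < ∑ i, m' i / (a - m' i) := by
  have hslope : ∀ x y, x < a → y < a →
      y / (a - y) - x / (a - x) = (y - x) * (a / ((a - x) * (a - y))) := by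
    intro x y hx hy
    field_simp [(sub_pos.mpr hx).ne', (sub_pos.mpr hy).ne']
    ring
  have hm₀p : p ≤ m i₀ := hp i₀
  -- Every increment dominates the linear one with slope `a / ((a - m i₀) * (a - p))`,
  -- strictly at `i₀`; the linear increments sum to zero.
  have hterm₀ : a / ((a - m i₀) * (a - p)) * (m' i₀ - m i₀) <
      m' i₀ / (a - m' i₀) - m i₀ / (a - m i₀) := by
    rw [hslope _ _ (by linarith) ha, mul_comm]
    refine mul_lt_mul_of_pos_left ?_ (by linarith)
    gcongr <;> first | exact mul_pos (by linarith) (by linarith) | linarith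
  have hterm : ∀ i, a / ((a - m i₀) * (a - p)) * (m' i - m i) ≤
      m' i / (a - m' i) - m i / (a - m i) := by
    intro i
    rcases eq_or_ne i i₀ with rfl | hi
    · exact hterm₀.le
    rw [hm' i hi, hslope _ _ (by linarith [hmax i]) (by linarith), mul_comm]
    refine mul_le_mul_of_nonpos_left ?_ (by linarith [hp i])
    gcongr <;> first | exact mul_pos (by linarith) (by linarith) | linarith [hmax i]
  have := sum_lt_sum (fun i _ => hterm i) ⟨i₀, mem_univ _, hterm₀⟩
  rw [← mul_sum, sum_sub_distrib, hsum, sub_self, mul_zero, sum_sub_distrib] at this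
  linarith

theorem Matrix.IsHermitian.exists_eigenvector_forall_dotProduct_mulVec_le {V : Type*}
    [Fintype V] [DecidableEq V] [Nonempty V] {A : Matrix V V ℝ} (hA : A.IsHermitian) :
    ∃ r : ℝ, (∃ x ≠ 0, A *ᵥ x = r • x) ∧ ∀ z, z ⬝ᵥ (A *ᵥ z) ≤ r * (z ⬝ᵥ z) := by
  set T := toEuclideanLin A
  have hT : T.IsSymmetric := isSymmetric_toEuclideanLin_iff.mpr hA
  set q : {y : EuclideanSpace ℝ V // y ≠ 0} → ℝ :=
    fun y => inner ℝ (T y) y / ‖(y : EuclideanSpace ℝ V)‖ ^ 2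
  obtain ⟨x, hx⟩ := hT.hasEigenvalue_iSup_of_finiteDimensional.exists_hasEigenvector
  refine ⟨⨆ y, q y, ⟨WithLp.ofLp x, by simpa using hx.2, ?_⟩, fun z => ?_⟩
  · simpa [T, q] using congrArg WithLp.ofLp hx.apply_eq_smul
  rcases eq_or_ne z 0 with rfl | hz
  · simp
  have hbdd : BddAbove (Set.range q) := by
    obtain ⟨M, hM⟩ := (LinearMap.toContinuousLinearMap T).bddAbove_rayleighQuotient
    exact ⟨M, by rintro _ ⟨y, rfl⟩; exact (le_abs_self _).trans (hM ⟨y, rfl⟩)⟩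
  have hle := le_ciSup hbdd ⟨WithLp.toLp 2 z, by simpa using hz⟩
  have hpos : 0 < ‖WithLp.toLp 2 z‖ ^ 2 := pow_pos (norm_pos_iff.mpr (by simpa using hz)) 2
  rw [div_le_iff₀ hpos, EuclideanSpace.real_norm_sq_eq] at hle
  simpa [q, T, EuclideanSpace.inner_eq_star_dotProduct, dotProduct_comm, dotProduct, sq] using hle

namespace SimpleGraph

variable {V : Type*} [Fintype V] (G : SimpleGraph V) [DecidableRel G.Adj]

theorem specRad_eq_of_forall_dotProduct_mulVec_le {r : ℝ}
    (hr : ∃ x ≠ 0, G.adjMatrix ℝ *ᵥ x = r • x)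
    (hle : ∀ z, z ⬝ᵥ (G.adjMatrix ℝ *ᵥ z) ≤ r * (z ⬝ᵥ z)) : specRad G = r := by
  have hA : (letI := Classical.decRel G.Adj; G.adjMatrix ℝ) = G.adjMatrix ℝ := by congr!
  rw [specRad, hA]
  refine IsGreatest.csSup_eq ⟨hr, ?_⟩
  rintro μ ⟨w, hw, hμ⟩
  have hpos : 0 < w ⬝ᵥ w :=
    (by simpa using dotProduct_star_self_nonneg w : 0 ≤ w ⬝ᵥ w).lt_of_ne'
      (dotProduct_self_eq_zero.not.mpr hw)
  refine le_of_mul_le_mul_right ?_ hpos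
  simpa [hμ] using hle w

theorem adjMatrix_mulVec_apply_eq_sum_sub [DecidableEq V] {v : V} (N : Finset V) (hv : v ∈ N)
    (hN : ∀ u, G.Adj v u ↔ u ∈ N ∧ u ≠ v) (x : V → ℝ) :
    (G.adjMatrix ℝ *ᵥ x) v = ∑ u ∈ N, x u - x v := by
  rw [adjMatrix_mulVec_apply, ← sum_erase_eq_sub hv]
  congr 1
  ext u
  simp [hN, and_comm]

variable [Nonempty V]

theorem exists_adjMatrix_mulVec_eq_specRad_smul :
    ∃ x ≠ 0, G.adjMatrix ℝ *ᵥ x = specRad G • x := by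
  classical
  obtain ⟨r, hr, hle⟩ := (G.isHermitian_adjMatrix ℝ).exists_eigenvector_forall_dotProduct_mulVec_le
  rwa [G.specRad_eq_of_forall_dotProduct_mulVec_le hr hle]

theorem dotProduct_adjMatrix_mulVec_le_specRad_mul (z : V → ℝ) :
    z ⬝ᵥ (G.adjMatrix ℝ *ᵥ z) ≤ specRad G * (z ⬝ᵥ z) := by
  classical
  obtain ⟨r, hr, hle⟩ := (G.isHermitian_adjMatrix ℝ).exists_eigenvector_forall_dotProduct_mulVec_le
  rw [G.specRad_eq_of_forall_dotProduct_mulVec_le hr hle]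
  exact hle z

end SimpleGraph

namespace joinCliques

variable {s t : ℕ} {m : Fin t → ℕ}

instance [NeZero s] : Nonempty (Fin s ⊕ (Σ i : Fin t, Fin (m i))) := ⟨.inl 0⟩

theorem sum_eq_sum_inl_add_sum_inr (x : Fin s ⊕ (Σ i : Fin t, Fin (m i)) → ℝ) :
    ∑ v, x v = ∑ l, x (.inl l) + ∑ i, ∑ j, x (.inr ⟨i, j⟩) := by
  rw [Fintype.sum_sum_type, Fintype.sum_sigma]

variable (s m) in
def blockVec (c : ℝ) (b : Fin t → ℝ) : Fin s ⊕ (Σ i : Fin t, Fin (m i)) → ℝ :=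
  Sum.elim (fun _ => c) (fun q => b q.1)

theorem blockVec_dotProduct_blockVec (c c' : ℝ) (b b' : Fin t → ℝ) :
    blockVec s m c b ⬝ᵥ blockVec s m c' b' = s * c * c' + ∑ i, m i * b i * b' i := by
  rw [dotProduct, sum_eq_sum_inl_add_sum_inr]
  simp [blockVec, mul_assoc]

variable (s m) in
noncomputable def secular (a : ℝ) : ℝ :=
  s * ∑ i, (m i : ℝ) / (a - m i) + s - a

theorem secular_lt_secular [NeZero s] {m' : Fin t → ℕ} {i₀ : Fin t} {p : ℕ} {a : ℝ}
    (hm' : ∀ i ≠ i₀, m' i = p) (hp : ∀ i, p ≤ m i) (hmax : ∀ i, m i ≤ m i₀)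
    (hlt : m i₀ < m' i₀) (ha : (m' i₀ : ℝ) < a) (hsum : ∑ i, m i = ∑ i, m' i) :
    secular s m a < secular s m' a := by
  have hcmp := sum_div_sub_lt_sum_div_sub (m := fun i => (m i : ℝ)) (m' := fun i => (m' i : ℝ))
    (Nat.cast_nonneg p) (fun i hi => by simp [hm' i hi]) (fun i => by exact_mod_cast hp i)
    (fun i => by exact_mod_cast hmax i) (by exact_mod_cast hlt) ha (by exact_mod_cast hsum)
  have hs : (0 : ℝ) < s := by exact_mod_cast NeZero.pos s
  simp only [secular]
  linarith [mul_lt_mul_of_pos_left hcmp hs]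

section

variable [DecidableRel (joinCliques s t m).Adj]

theorem adjMatrix_mulVec_inl (x : Fin s ⊕ (Σ i : Fin t, Fin (m i)) → ℝ) (k : Fin s) :
    ((joinCliques s t m).adjMatrix ℝ *ᵥ x) (.inl k) = ∑ v, x v - x (.inl k) := by
  classical
  refine (joinCliques s t m).adjMatrix_mulVec_apply_eq_sum_sub univ (mem_univ _)
    (fun u => ?_) x
  simp [joinCliques, ne_comm]

theorem adjMatrix_mulVec_inr (x : Fin s ⊕ (Σ i : Fin t, Fin (m i)) → ℝ) (i : Fin t) (j : Fin (m i)) :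
    ((joinCliques s t m).adjMatrix ℝ *ᵥ x) (.inr ⟨i, j⟩) =
      ∑ l, x (.inl l) + ∑ j', x (.inr ⟨i, j'⟩) - x (.inr ⟨i, j⟩) := by
  classical
  rw [adjMatrix_mulVec_apply_eq_sum_sub _ {u | ∀ q, u = .inr q → q.1 = i} (by simp),
    sum_filter, sum_eq_sum_inl_add_sum_inr, Fintype.sum_eq_single i fun i' hi' => ?_]
  · simp
  · simp [hi']
  · rintro (l | ⟨i', j'⟩)
    · simp [joinCliques]
    · grind [joinCliques]

theorem adjMatrix_mulVec_blockVec (c : ℝ) (b : Fin t → ℝ) :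
    (joinCliques s t m).adjMatrix ℝ *ᵥ blockVec s m c b =
      blockVec s m ((s - 1) * c + ∑ i, m i * b i) (fun i => s * c + (m i - 1) * b i) := by
  funext v
  rcases v with k | ⟨i, j⟩
  · rw [adjMatrix_mulVec_inl, sum_eq_sum_inl_add_sum_inr]
    simp only [blockVec, Sum.elim_inl, Sum.elim_inr, sum_const, card_univ, Fintype.card_fin,
      nsmul_eq_mul]
    ring
  · rw [adjMatrix_mulVec_inr]
    simp only [blockVec, Sum.elim_inl, Sum.elim_inr, sum_const, card_univ, Fintype.card_fin,
      nsmul_eq_mul]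
    ring

theorem secular_eq_zero_of_mulVec_eq_smul {ρ : ℝ} {x : Fin s ⊕ (Σ i : Fin t, Fin (m i)) → ℝ}
    (hx : x ≠ 0) (hρx : (joinCliques s t m).adjMatrix ℝ *ᵥ x = ρ • x)
    (hm : ∀ i, (m i : ℝ) < ρ + 1) (hρ : 0 < ρ + 1) : secular s m (ρ + 1) = 0 := by
  set σ := ∑ l, x (.inl l)
  set β := fun i => ∑ j, x (.inr ⟨i, j⟩)
  have hinl : ∀ k, (ρ + 1) * x (.inl k) = σ + ∑ i, β i := fun k => by
    have := congrFun hρx (.inl k)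
    rw [adjMatrix_mulVec_inl, sum_eq_sum_inl_add_sum_inr] at this
    simp only [Pi.smul_apply, smul_eq_mul] at this
    linarith
  have hinr : ∀ i j, (ρ + 1) * x (.inr ⟨i, j⟩) = σ + β i := fun i j => by
    have := congrFun hρx (.inr ⟨i, j⟩)
    rw [adjMatrix_mulVec_inr] at this
    simp only [Pi.smul_apply, smul_eq_mul] at this
    linarith
  have hσ : (ρ + 1) * σ = s * (σ + ∑ i, β i) := by
    rw [mul_sum, sum_congr rfl fun k _ => hinl k, sum_const, card_univ, Fintype.card_fin,
      nsmul_eq_mul]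
  have hβ : ∀ i, β i = σ * (m i / (ρ + 1 - m i)) := fun i => by
    have : (ρ + 1) * β i = m i * (σ + β i) := by
      rw [mul_sum, sum_congr rfl fun j _ => hinr i j, sum_const, card_univ, Fintype.card_fin,
        nsmul_eq_mul]
    have := (sub_pos.mpr (hm i)).ne'
    field_simp
    linarith
  have hσ0 : σ ≠ 0 := by
    intro hσ0
    refine hx (funext fun v => ?_)
    rcases v with k | ⟨i, j⟩
    · simpa [hσ0, hβ, hρ.ne'] using hinl k
    · simpa [hσ0, hβ, hρ.ne'] using hinr i j
  have : σ * secular s m (ρ + 1) = 0 := by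
    simp only [secular, hβ, ← mul_sum] at hσ ⊢
    linear_combination -hσ
  exact (mul_eq_zero.mp this).resolve_left hσ0

variable [NeZero s]

theorem add_sub_one_le_specRad (i : Fin t) :
    (s : ℝ) + m i - 1 ≤ specRad (joinCliques s t m) := by
  set z := blockVec s m 1 (fun i' => if i' = i then 1 else 0)
  have hAz : z ⬝ᵥ ((joinCliques s t m).adjMatrix ℝ *ᵥ z) = (s + m i - 1) * (s + m i) := by
    simp only [z, adjMatrix_mulVec_blockVec, blockVec_dotProduct_blockVec, mul_one, mul_zero, zero_mul,
      mul_ite, ite_mul, sum_ite_eq', mem_univ, ↓reduceIte]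
    ring
  have hz : z ⬝ᵥ z = s + m i := by
    simp [z, blockVec_dotProduct_blockVec]
  have hpos : (0 : ℝ) < s + m i := by have := NeZero.pos s; positivity
  refine le_of_mul_le_mul_right ?_ hpos
  rw [← hAz, ← hz]
  exact dotProduct_adjMatrix_mulVec_le_specRad_mul _ z

theorem sub_one_lt_specRad_of_secular_pos {a : ℝ} (hm : ∀ i, (m i : ℝ) < a)
    (hpos : 0 < secular s m a) : a - 1 < specRad (joinCliques s t m) := by
  set z := blockVec s m 1 (fun i => s / (a - m i))
  have hAz : z ⬝ᵥ ((joinCliques s t m).adjMatrix ℝ *ᵥ z) =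
      (a - 1) * (z ⬝ᵥ z) + s * secular s m a := by
    have hb : ∀ i, (m i : ℝ) * (s / (a - m i)) * (s * 1 + (m i - 1) * (s / (a - m i))) =
        (a - 1) * (m i * (s / (a - m i)) * (s / (a - m i))) := fun i => by
      have := (sub_pos.mpr (hm i)).ne'
      field_simp
      ring
    have hmb : ∑ i, (m i : ℝ) * (s / (a - m i)) = s * ∑ i, (m i : ℝ) / (a - m i) := by
      rw [mul_sum]
      exact sum_congr rfl fun i _ => mul_div_left_comm _ _ _
    simp only [z, adjMatrix_mulVec_blockVec, blockVec_dotProduct_blockVec, secular]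
    rw [sum_congr rfl fun i _ => hb i, ← mul_sum, hmb]
    ring
  have hz : 0 ≤ z ⬝ᵥ z := by simpa using dotProduct_star_self_nonneg z
  have hs : (0 : ℝ) < s := by exact_mod_cast NeZero.pos s
  refine lt_of_mul_lt_mul_right ?_ hz
  calc (a - 1) * (z ⬝ᵥ z) < z ⬝ᵥ ((joinCliques s t m).adjMatrix ℝ *ᵥ z) := by
        rw [hAz]; nlinarith
    _ ≤ _ := dotProduct_adjMatrix_mulVec_le_specRad_mul _ z

end

theorem specRad_lt_specRad_of_concentrate [NeZero s] {m m' : Fin t → ℕ} {i₀ : Fin t} {p : ℕ}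
    (hm' : ∀ i ≠ i₀, m' i = p) (hp : ∀ i, p ≤ m i) (hmax : ∀ i, m i ≤ m i₀)
    (hlt : m i₀ < m' i₀) (hsum : ∑ i, m i = ∑ i, m' i) :
    specRad (joinCliques s t m) < specRad (joinCliques s t m') := by
  classical
  set ρ := specRad (joinCliques s t m)
  have hs : (1 : ℝ) ≤ s := by exact_mod_cast NeZero.one_le
  have hρ : ∀ i, (s : ℝ) + m i - 1 ≤ ρ := add_sub_one_le_specRad
  have hρ' := add_sub_one_le_specRad (s := s) (m := m') i₀
  rcases le_or_gt (ρ + 1) (m' i₀) with hρN | hNρ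
  · linarith
  obtain ⟨x, hx, hρx⟩ := (joinCliques s t m).exists_adjMatrix_mulVec_eq_specRad_smul
  have hsec : secular s m (ρ + 1) = 0 := secular_eq_zero_of_mulVec_eq_smul hx hρx
    (fun i => by linarith [hρ i]) (by linarith [hρ i₀])
  have hm'max : ∀ i, m' i ≤ m' i₀ := fun i => by
    rcases eq_or_ne i i₀ with rfl | hi
    · rfl
    · exact (hm' i hi).trans_le ((hp i₀).trans hlt.le)
  simpa using sub_one_lt_specRad_of_secular_pos (a := ρ + 1)
    (fun i => (Nat.cast_le.mpr (hm'max i)).trans_lt hNρ)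
    (hsec ▸ secular_lt_secular hm' hp hmax hlt hNρ hsum)

end joinCliques

theorem spectralRadius_joinCliques_lt_general
    (n s t p : ℕ) (hs : 1 ≤ s) (ht : 1 ≤ t)
    (m : Fin t → ℕ) (hanti : Antitone m) (hmp : ∀ i, p ≤ m i)
    (hsum : n = (∑ i, m i) + s)
    (hlt : m ⟨0, ht⟩ < n - s - p * (t - 1)) :
    specRad (joinCliques s t m) <
      specRad (joinCliques s t fun i => if i.val = 0 then n - s - p * (t - 1) else p) := by
  have : NeZero s := ⟨by omega⟩
  refine joinCliques.specRad_lt_specRad_of_concentrate (i₀ := ⟨0, ht⟩) (fun i hi => if_neg ?_)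
    hmp (fun i => hanti (Nat.zero_le i.val)) (by simpa using hlt) ?_
  · simpa [Fin.ext_iff] using hi
  have := Nat.mul_le_mul_left p (Nat.sub_le t 1)
  have : p * t ≤ ∑ i, m i := by
    simpa [mul_comm] using card_nsmul_le_sum univ m p fun i _ => hmp i
  rw [Fin.sum_ite_val_eq_zero ht, smul_eq_mul, Nat.mul_comm (t - 1) p]
  omega

/-- Let `n = n_1 + ⋯ + n_t + s` with `n_1 ≥ n_2 ≥ ⋯ ≥ n_t ≥ p` and `n_1 < n - s - p(t-1)`.
Then `ρ(K_s ∇ (K_{n_1} ∪ ⋯ ∪ K_{n_t})) < ρ(K_s ∇ (K_{n-s-p(t-1)} ∪ (t-1)K_p))`. -/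
theorem spectralRadius_joinCliques_lt
    (n s t p : ℕ) (hs : 1 ≤ s) (ht : 1 ≤ t) (hp : 1 ≤ p)
    (m : Fin t → ℕ) (hanti : Antitone m) (hmp : ∀ i, p ≤ m i)
    (hsum : n = (∑ i, m i) + s)
    (hlt : m ⟨0, ht⟩ < n - s - p * (t - 1)) :
    specRad (joinCliques s t m) <
      specRad (joinCliques s t fun i => if i.val = 0 then n - s - p * (t - 1) else p) :=
  spectralRadius_joinCliques_lt_general n s t p hs ht m hanti hmp hsum hlt
end

section
/- Let G be a connected graph of order n. If ρ(G) ≥ n − 2, then G contains a Hamiltonian path, unless G is isomorphic to H_{n,1} = K_1 ∪ K_{n−1}. -/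
open SimpleGraph Matrix

/-- `Hg n a` is `H_{n,a} = K_{a-1} ∇ (K_1 ∪ K_{n-a})`: vertices `0, …, a-2` form a dominating
clique, vertex `a-1` is joined only to them, and vertices `a, …, n-1` form a clique. -/
def Hg (n a : ℕ) : SimpleGraph (Fin n) where
  Adj x y := x ≠ y ∧ (x.val < a - 1 ∨ y.val < a - 1 ∨ (a ≤ x.val ∧ a ≤ y.val))
  symm := by
    constructor
    rintro x y ⟨h1, h2⟩
    exact ⟨Ne.symm h1, by tauto⟩
  loopless := by constructor; rintro x ⟨h1, -⟩; exact h1 rfl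

/-!
If `A x = μ x` and `i` maximises `|x i|`, then `μ² |x i| = |(A² x) i| ≤ (∑_{j ∼ i} deg j) |x i|`,
and in a connected graph `∑_{j ∼ i} deg j ≤ 2m - n + 1` because every vertex outside `N(i)`
other than `i` has degree at least one (Hong's bound). So `ρ(G) ≥ n - 2` forces
`(n - 2)² ≤ 2m - n + 1`, i.e. the complement of `G` has at most `n - 2` edges.

Such a graph is traceable, by induction: a vertex `v` whose complement degree `k` is least among
the positive ones satisfies `k (k + 1) ≤ 2 (n - 2)`, since `v` and its `k` non-neighbours all
have complement degree at least `k`; hence `2k ≤ n - 1`. Deleting `v` removes `k ≥ 1`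
complement edges, so `G - v` has a Hamiltonian path, and since `v` is non-adjacent to at most
half of its vertices, `v` can be put at one of its ends or between two consecutive neighbours.
-/

open Finset

namespace SimpleGraph

variable {V : Type*}

section Insertion

variable {G : SimpleGraph V} [DecidableRel G.Adj] {v : V}

theorem exists_isChain_cons_perm_cons {a : V} {L : List V} (hL : (a :: L).IsChain G.Adj)
    (hcount : L.countP (¬G.Adj v ·) + (a :: L).countP (¬G.Adj v ·) ≤ L.length) :
    ∃ M : List V, (a :: M).IsChain G.Adj ∧ M.Perm (v :: L) := by
  induction L generalizing a with
  | nil =>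
    have hva : G.Adj v a := by simpa using hcount
    exact ⟨[v], .cons_cons hva.symm (.singleton v), .refl _⟩
  | cons b L ih =>
    rw [List.isChain_cons_cons] at hL
    by_cases hvab : G.Adj v a ∧ G.Adj v b
    · exact ⟨v :: b :: L, .cons_cons hvab.1.symm (.cons_cons hvab.2 hL.2), .refl _⟩
    · obtain ⟨M, hM, hperm⟩ := ih hL.2 (by
        simp only [List.countP_cons, List.length_cons] at hcount ⊢
        grind)
      exact ⟨b :: M, .cons_cons hL.1 hM, (hperm.cons b).trans (.swap v b L)⟩

theorem exists_isChain_perm_cons {L : List V} (hL : L.IsChain G.Adj) (hne : L ≠ [])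
    (hcount : 2 * L.countP (¬G.Adj v ·) ≤ L.length) :
    ∃ M : List V, M.IsChain G.Adj ∧ M.Perm (v :: L) := by
  obtain ⟨a, L, rfl⟩ := List.exists_cons_of_ne_nil hne
  by_cases hva : G.Adj v a
  · exact ⟨v :: a :: L, .cons_cons hva hL, .refl _⟩
  · obtain ⟨M, hM, hperm⟩ := exists_isChain_cons_perm_cons (v := v) hL (by
      simp only [List.countP_cons, List.length_cons, hva] at hcount ⊢
      grind)
    exact ⟨a :: M, hM, (hperm.cons a).trans (.swap v a L)⟩

end Insertion

section InducedDegree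

variable [DecidableEq V] (H : SimpleGraph V) [DecidableRel H.Adj]

theorem sum_card_filter_adj_eq_sum_erase_add {s : Finset V} {v : V} (hv : v ∈ s) :
    ∑ u ∈ s, #{x ∈ s | H.Adj u x} =
      ∑ u ∈ s.erase v, #{x ∈ s.erase v | H.Adj u x} + 2 * #{x ∈ s | H.Adj v x} := by
  have hdeg : #{x ∈ s.erase v | H.Adj v x} = #{x ∈ s | H.Adj v x} := by
    rw [filter_erase, erase_eq_of_notMem (by simp)]
  have hcol : ∑ u ∈ s.erase v, (if H.Adj u v then 1 else 0) = #{x ∈ s | H.Adj v x} := by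
    rw [← card_filter, ← hdeg]
    simp only [H.adj_comm]
  calc ∑ u ∈ s, #{x ∈ s | H.Adj u x}
      = #{x ∈ s | H.Adj v x} + ∑ u ∈ s.erase v, #{x ∈ s | H.Adj u x} :=
        (add_sum_erase s _ hv).symm
    _ = #{x ∈ s | H.Adj v x} + ∑ u ∈ s.erase v,
          (#{x ∈ s.erase v | H.Adj u x} + if H.Adj u v then 1 else 0) := by
        congr 1
        refine sum_congr rfl fun u _ => ?_
        rw [← insert_erase hv, filter_insert, erase_insert (notMem_erase v s)]
        split_ifs with h <;> simp [card_insert_of_notMem, h]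
    _ = _ := by rw [sum_add_distrib, hcol]; ring

theorem mul_succ_le_sum_card_filter_adj {s : Finset V} {v : V} (hv : v ∈ s)
    (hmin : ∀ u ∈ s, H.Adj v u → #{x ∈ s | H.Adj v x} ≤ #{x ∈ s | H.Adj u x}) :
    #{x ∈ s | H.Adj v x} * (#{x ∈ s | H.Adj v x} + 1) ≤ ∑ u ∈ s, #{x ∈ s | H.Adj u x} := by
  have hvN : v ∉ s.filter (H.Adj v) := by simp
  calc #{x ∈ s | H.Adj v x} * (#{x ∈ s | H.Adj v x} + 1)
      = #(insert v (s.filter (H.Adj v))) • #{x ∈ s | H.Adj v x} := by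
        rw [card_insert_of_notMem hvN, smul_eq_mul, mul_comm]
    _ ≤ ∑ u ∈ insert v (s.filter (H.Adj v)), #{x ∈ s | H.Adj u x} := by
        refine card_nsmul_le_sum _ _ _ fun u hu => ?_
        rcases mem_insert.1 hu with rfl | hu
        · exact le_rfl
        · exact hmin u (mem_filter.1 hu).1 (mem_filter.1 hu).2
    _ ≤ ∑ u ∈ s, #{x ∈ s | H.Adj u x} :=
        sum_le_sum_of_subset (insert_subset hv (filter_subset _ _))

end InducedDegree

section Traceable

variable [DecidableEq V] {G : SimpleGraph V} [DecidableRel G.Adj]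

theorem exists_isChain_perm_toList_of_sum_compl_le (s : Finset V)
    (hs : ∑ u ∈ s, #{x ∈ s | Gᶜ.Adj u x} ≤ 2 * (#s - 2)) :
    ∃ L : List V, L.IsChain G.Adj ∧ L.Perm s.toList := by
  induction s using Finset.strongInduction with
  | H s ih =>
  by_cases hcomplete : ∀ u ∈ s, #{x ∈ s | Gᶜ.Adj u x} = 0
  · refine ⟨s.toList, (s.nodup_toList.imp_of_mem fun ha hb hab => ?_).isChain, .refl _⟩
    by_contra hnadj
    have := hcomplete _ (mem_toList.1 ha)
    rw [card_eq_zero, filter_eq_empty_iff] at this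
    exact this (mem_toList.1 hb) ((compl_adj G _ _).2 ⟨hab, hnadj⟩)
  push Not at hcomplete
  obtain ⟨v, hv, hmin⟩ := exists_min_image {u ∈ s | #{x ∈ s | Gᶜ.Adj u x} ≠ 0}
    (fun u => #{x ∈ s | Gᶜ.Adj u x}) (by simpa [Finset.Nonempty] using hcomplete)
  rw [mem_filter] at hv
  set k := #{x ∈ s | Gᶜ.Adj v x} with hk_def
  have hk : k * (k + 1) ≤ ∑ u ∈ s, #{x ∈ s | Gᶜ.Adj u x} :=
    mul_succ_le_sum_card_filter_adj Gᶜ hv.1 fun u hu hvu => hmin u <| mem_filter.2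
      ⟨hu, card_ne_zero.2 ⟨v, mem_filter.2 ⟨hv.1, hvu.symm⟩⟩⟩
  have hsplit := sum_card_filter_adj_eq_sum_erase_add Gᶜ hv.1
  have hcard := card_erase_of_mem hv.1
  have h2k : 2 * k + 1 ≤ #s := by
    have hk1 : 1 ≤ k := Nat.one_le_iff_ne_zero.2 hv.2
    have hkk : k * (k + 1) + 4 ≤ 2 * #s := by
      have : 2 ≤ k * (k + 1) := by nlinarith
      omega
    nlinarith [sq_nonneg ((k : ℤ) - 2)]
  obtain ⟨L, hL, hperm⟩ := ih (s.erase v) (erase_ssubset hv.1) (by omega)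
  have hcount : L.countP (¬G.Adj v ·) = k := by
    rw [hperm.countP_eq, ← (s.erase v).nodup_toList.card_eq_countP, toList_toFinset, hk_def]
    congr 1
    ext x
    simp only [mem_filter, mem_erase, compl_adj]
    tauto
  have hne : L ≠ [] := by
    rw [← List.length_pos_iff, hperm.length_eq, length_toList]
    omega
  obtain ⟨M, hM, hMperm⟩ := exists_isChain_perm_cons hL hne (by
    rw [hcount, hperm.length_eq, length_toList]; omega)
  refine ⟨M, hM, hMperm.trans ?_⟩
  rw [← insert_erase hv.1]
  exact ((hperm.cons v).trans (toList_insert (notMem_erase v s)).symm)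

end Traceable

section Spectral

variable [Fintype V] {G : SimpleGraph V} [DecidableRel G.Adj]

theorem exists_sq_le_sum_degree_of_mulVec_eq_smul {μ : ℝ} {x : V → ℝ} (hx : x ≠ 0)
    (h : G.adjMatrix ℝ *ᵥ x = μ • x) :
    ∃ i, μ ^ 2 ≤ ∑ j ∈ G.neighborFinset i, (G.degree j : ℝ) := by
  obtain ⟨j₀, hj₀⟩ := Function.ne_iff.1 hx
  obtain ⟨i, -, hmax⟩ := exists_max_image univ (fun j => |x j|) ⟨j₀, mem_univ _⟩
  have hxi : 0 < |x i| := (abs_pos.2 hj₀).trans_le (hmax j₀ (mem_univ _))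
  have hsq : μ ^ 2 * x i = ∑ j ∈ G.neighborFinset i, ∑ k ∈ G.neighborFinset j, x k := by
    have h2 : G.adjMatrix ℝ *ᵥ (G.adjMatrix ℝ *ᵥ x) = (μ ^ 2) • x := by
      rw [h, mulVec_smul, h, smul_smul, sq]
    simpa only [adjMatrix_mulVec_apply, Pi.smul_apply, smul_eq_mul] using (congrFun h2 i).symm
  refine ⟨i, le_of_mul_le_mul_right ?_ hxi⟩
  calc μ ^ 2 * |x i| = |∑ j ∈ G.neighborFinset i, ∑ k ∈ G.neighborFinset j, x k| := by
        rw [← hsq, abs_mul, abs_of_nonneg (sq_nonneg μ)]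
    _ ≤ ∑ j ∈ G.neighborFinset i, ∑ k ∈ G.neighborFinset j, |x k| :=
        (abs_sum_le_sum_abs _ _).trans (sum_le_sum fun j _ => abs_sum_le_sum_abs _ _)
    _ ≤ ∑ j ∈ G.neighborFinset i, ∑ _k ∈ G.neighborFinset j, |x i| :=
        sum_le_sum fun j _ => sum_le_sum fun k _ => hmax k (mem_univ _)
    _ = (∑ j ∈ G.neighborFinset i, (G.degree j : ℝ)) * |x i| := by
        simp [sum_mul, card_neighborFinset_eq_degree]

variable [DecidableEq V]

theorem Preconnected.sum_degree_neighborFinset_add_card_le (hG : G.Preconnected) (i : V) :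
    ∑ j ∈ G.neighborFinset i, G.degree j + Fintype.card V ≤ 2 * #G.edgeFinset + 1 := by
  have hi : i ∈ univ \ G.neighborFinset i := by simp
  have hR : #((univ \ G.neighborFinset i).erase i) + G.degree i + 1 = Fintype.card V := by
    rw [card_erase_of_mem hi, card_univ_sdiff, card_neighborFinset_eq_degree]
    have := G.degree_lt_card_verts i
    omega
  have hRdeg : #((univ \ G.neighborFinset i).erase i) ≤
      ∑ v ∈ (univ \ G.neighborFinset i).erase i, G.degree v := by
    simpa only [smul_eq_mul, mul_one] using
      card_nsmul_le_sum _ (fun v => G.degree v) 1 fun v hv =>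
        (hG i v).degree_pos_right (mem_erase.1 hv).1.symm
  have hsplit : ∑ j ∈ G.neighborFinset i, G.degree j +
      (G.degree i + ∑ v ∈ (univ \ G.neighborFinset i).erase i, G.degree v) =
      2 * #G.edgeFinset := by
    rw [← sum_degrees_eq_twice_card_edges, ← sum_sdiff (subset_univ (G.neighborFinset i)),
      ← add_sum_erase _ _ hi, add_comm]
  omega

theorem Preconnected.sq_add_card_le_of_mulVec_eq_smul (hG : G.Preconnected) {μ : ℝ}
    {x : V → ℝ} (hx : x ≠ 0) (h : G.adjMatrix ℝ *ᵥ x = μ • x) :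
    μ ^ 2 + Fintype.card V ≤ 2 * #G.edgeFinset + 1 := by
  obtain ⟨i, hi⟩ := exists_sq_le_sum_degree_of_mulVec_eq_smul hx h
  have hdeg : (∑ j ∈ G.neighborFinset i, (G.degree j : ℝ)) + Fintype.card V ≤
      2 * #G.edgeFinset + 1 := by
    exact_mod_cast hG.sum_degree_neighborFinset_add_card_le i
  linarith

theorem card_edgeFinset_add_card_edgeFinset_compl :
    #G.edgeFinset + #Gᶜ.edgeFinset = (Fintype.card V).choose 2 := by
  rw [← card_edgeFinset_top_eq_card_choose_two, ← card_union_of_disjoint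
    (disjoint_edgeFinset.2 disjoint_compl_right)]
  congr 1
  ext e
  induction e using Sym2.ind
  simp only [mem_union, mem_edgeFinset, mem_edgeSet, compl_adj, top_adj]
  grind [G.ne_of_adj]

theorem specRad_le_sqrt (hG : G.Preconnected) :
    specRad G ≤ √(2 * #G.edgeFinset + 1 - Fintype.card V) := by
  refine Real.sSup_le (fun μ ⟨x, hx, h⟩ => Real.le_sqrt_of_sq_le ?_) (Real.sqrt_nonneg _)
  have h' : G.adjMatrix ℝ *ᵥ x = μ • x := by convert h
  linarith [hG.sq_add_card_le_of_mulVec_eq_smul hx h']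

theorem card_edgeFinset_compl_le_of_le_specRad (hG : G.Preconnected)
    (hρ : (Fintype.card V : ℝ) - 2 ≤ specRad G) : #Gᶜ.edgeFinset ≤ Fintype.card V - 2 := by
  rcases Nat.lt_or_ge (Fintype.card V) 2 with hn | hn
  · have := Gᶜ.card_edgeFinset_le_card_choose_two
    rw [Nat.choose_eq_zero_of_lt hn] at this
    omega
  obtain ⟨v⟩ : Nonempty V := Fintype.card_pos_iff.1 (by omega)
  have hb : (0 : ℝ) ≤ 2 * #G.edgeFinset + 1 - Fintype.card V := by
    have := hG.sum_degree_neighborFinset_add_card_le v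
    rw [sub_nonneg]
    exact_mod_cast (Nat.le_add_left _ _).trans this
  have hsq : ((Fintype.card V : ℝ) - 2) ^ 2 ≤ 2 * #G.edgeFinset + 1 - Fintype.card V :=
    (Real.le_sqrt (by simp [hn]) hb).1 (hρ.trans (specRad_le_sqrt hG))
  have hsum : (#G.edgeFinset : ℝ) + #Gᶜ.edgeFinset =
      Fintype.card V * (Fintype.card V - 1) / 2 := by
    rw [← Nat.cast_choose_two ℝ, ← card_edgeFinset_add_card_edgeFinset_compl (G := G)]
    push_cast
    ring
  have hlt : (#Gᶜ.edgeFinset : ℝ) + 1 < Fintype.card V := by nlinarith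
  have hlt' : #Gᶜ.edgeFinset + 1 < Fintype.card V := by exact_mod_cast hlt
  omega

end Spectral

section Hamiltonian

variable [Fintype V] [DecidableEq V] {G : SimpleGraph V} [DecidableRel G.Adj]

theorem exists_isHamiltonian_of_card_edgeFinset_compl_le [Nonempty V]
    (h : #Gᶜ.edgeFinset ≤ Fintype.card V - 2) :
    ∃ (a b : V) (p : G.Walk a b), p.IsHamiltonian := by
  have hsum : ∑ u ∈ univ, #{x ∈ univ | Gᶜ.Adj u x} ≤ 2 * (#(univ : Finset V) - 2) := by
    simp_rw [← neighborFinset_eq_filter, card_neighborFinset_eq_degree,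
      sum_degrees_eq_twice_card_edges, card_univ]
    omega
  obtain ⟨L, hL, hperm⟩ := exists_isChain_perm_toList_of_sum_compl_le univ hsum
  have hne : L ≠ [] := by
    rw [← List.length_pos_iff, hperm.length_eq, length_toList]
    exact card_pos.2 univ_nonempty
  refine ⟨_, _, Walk.ofSupport L hne hL, fun a => ?_⟩
  rw [Walk.support_ofSupport, hperm.count_eq]
  exact List.count_eq_one_of_mem (nodup_toList _) (mem_toList.2 (mem_univ a))

end Hamiltonian

end SimpleGraph

/-- Let `G` be a connected graph of order `n`. If `ρ(G) ≥ n - 2`, then `G` contains a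
Hamiltonian path, unless `G ≅ H_{n,1} = K_1 ∪ K_{n-1}`. -/
theorem hamiltonianPath_of_spectralRadius
    {V : Type*} [Fintype V] [DecidableEq V] (G : SimpleGraph V) (n : ℕ)
    (hcard : Fintype.card V = n) (hconn : G.Connected)
    (hρ : (n : ℝ) - 2 ≤ specRad G) :
    (∃ (a b : V) (p : G.Walk a b), p.IsHamiltonian) ∨ Nonempty (G ≃g Hg n 1) := by
  classical
  -- `K_1 ∪ K_{n-1}` is disconnected for `n ≥ 2`, so the exceptional case never arises.
  have : Nonempty V := hconn.nonempty
  subst hcard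
  exact Or.inl (exists_isHamiltonian_of_card_edgeFinset_compl_le
    (card_edgeFinset_compl_le_of_le_specRad hconn.preconnected hρ))
end

section
/- A graph G of order n has a fractional perfect matching if and only if for every subset S ⊆ V(G), the number of isolated vertices of G − S satisfies i(G − S) ≤ |S|. -/
open SimpleGraph Matrix


/-- `G` has a fractional perfect matching: a weighting `f` of the edges with values in `[0, 1]`
such that the total weight at each vertex is at most `1` and the total weight of all edges is
half the number of vertices. -/
def HasFPM {V : Type*} [Fintype V] (G : SimpleGraph V) : Prop :=
  letI : DecidableEq V := Classical.decEq V
  letI : DecidableRel G.Adj := Classical.decRel _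
  ∃ f : Sym2 V → ℝ,
    (∀ e, e ∉ G.edgeSet → f e = 0) ∧
    (∀ e ∈ G.edgeSet, 0 ≤ f e ∧ f e ≤ 1) ∧
    (∀ v : V, ∑ e ∈ G.edgeFinset.filter (fun e => v ∈ e), f e ≤ 1) ∧
    (∑ e ∈ G.edgeFinset, f e = (Fintype.card V : ℝ) / 2)

/-- The number of isolated vertices of the subgraph of `G` induced on the complement of `S`,
i.e. `i(G - S)`. -/
noncomputable def isolCount {V : Type*} (G : SimpleGraph V) (S : Set V) : ℕ :=
  Nat.card {v : ↥Sᶜ // ∀ w, ¬ (G.induce Sᶜ).Adj v w}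

namespace FPMaux

open Finset

variable {V : Type*} [Fintype V] [DecidableEq V] (G : SimpleGraph V) [DecidableRel G.Adj]

/-- The subtype in `isolCount` is equivalent to a plain subtype of `V`. -/
def isolEquiv (S : Set V) :
    {v : ↥Sᶜ // ∀ w, ¬ (G.induce Sᶜ).Adj v w} ≃
      {v : V // v ∉ S ∧ ∀ w, w ∉ S → ¬ G.Adj v w} where
  toFun x := ⟨(x.1 : V), x.1.2, fun w hw hadj => x.2 ⟨w, hw⟩ hadj⟩
  invFun x := ⟨⟨x.1, x.2.1⟩, fun w hadj => x.2.2 w w.2 hadj⟩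
  left_inv x := rfl
  right_inv x := rfl

lemma isolCount_eq (S : Set V) [DecidablePred (· ∈ S)] :
    isolCount G S = (univ.filter (fun v => v ∉ S ∧ ∀ w, w ∉ S → ¬ G.Adj v w)).card := by
  rw [isolCount, Nat.card_congr (isolEquiv G S), Nat.card_eq_fintype_card,
    Fintype.card_subtype]

lemma card_filter_mem (e : Sym2 V) (he : e ∈ G.edgeSet) :
    (univ.filter (fun v => v ∈ e)).card = 2 := by
  induction e with
  | _ a b =>
    rw [mem_edgeSet] at he
    have : univ.filter (fun v => v ∈ s(a, b)) = {a, b} := by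
      ext x; simp [Sym2.mem_iff]
    rw [this, card_insert_of_notMem (by simp [he.ne]), card_singleton]

lemma sum_swap_deg (T : Finset V) (f : Sym2 V → ℝ) :
    ∑ v ∈ T, ∑ e ∈ G.edgeFinset.filter (fun e => v ∈ e), f e
      = ∑ e ∈ G.edgeFinset, ((T.filter (fun v => v ∈ e)).card : ℝ) * f e := by
  simp_rw [Finset.sum_filter]
  rw [Finset.sum_comm]
  refine Finset.sum_congr rfl fun e _ => ?_
  rw [← Finset.sum_filter, Finset.sum_const, nsmul_eq_mul]

lemma aux_forward
    (h : ∃ f : Sym2 V → ℝ,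
      (∀ e, e ∉ G.edgeSet → f e = 0) ∧
      (∀ e ∈ G.edgeSet, 0 ≤ f e ∧ f e ≤ 1) ∧
      (∀ v : V, ∑ e ∈ G.edgeFinset.filter (fun e => v ∈ e), f e ≤ 1) ∧
      (∑ e ∈ G.edgeFinset, f e = (Fintype.card V : ℝ) / 2))
    (S : Set V) : isolCount G S ≤ Nat.card S := by
  classical
  obtain ⟨f, h0, h01, hdeg, htot⟩ := h
  -- every vertex has weighted degree exactly 1
  have hsum : ∑ v : V, ∑ e ∈ G.edgeFinset.filter (fun e => v ∈ e), f e
      = ∑ _v : V, (1 : ℝ) := by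
    rw [sum_swap_deg]
    have : ∀ e ∈ G.edgeFinset,
        ((univ.filter (fun v => v ∈ e)).card : ℝ) * f e = 2 * f e := by
      intro e he
      rw [card_filter_mem G e (mem_edgeFinset.mp he)]
      norm_num
    rw [Finset.sum_congr rfl this, ← Finset.mul_sum, htot]
    simp [Finset.card_univ]
    ring
  have hdeg1 : ∀ v : V, ∑ e ∈ G.edgeFinset.filter (fun e => v ∈ e), f e = 1 :=
    fun v => (Finset.sum_eq_sum_iff_of_le (fun i _ => hdeg i)).mp hsum v (mem_univ v)
  -- the isolated set
  set I : Finset V := univ.filter (fun v => v ∉ S ∧ ∀ w, w ∉ S → ¬ G.Adj v w) with hI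
  have hIprop : ∀ v ∈ I, v ∉ S ∧ ∀ w, w ∉ S → ¬ G.Adj v w :=
    fun v hv => (Finset.mem_filter.mp hv).2
  -- per-edge cardinality comparison
  have hcard : ∀ e ∈ G.edgeFinset,
      (I.filter (fun v => v ∈ e)).card ≤ (S.toFinset.filter (fun v => v ∈ e)).card := by
    intro e he
    have hadj := mem_edgeFinset.mp he
    induction e with
    | _ a b =>
      rw [mem_edgeSet] at hadj
      have key : ∀ a b : V, G.Adj a b → a ∈ I →
          (I.filter (fun v => v ∈ s(a, b))).card ≤
            (S.toFinset.filter (fun v => v ∈ s(a, b))).card := by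
        intro a b hadj haI
        have hbS : b ∈ S := by
          by_contra hbS
          exact (hIprop a haI).2 b hbS hadj
        have hbI : b ∉ I := fun hbI => (hIprop b hbI).1 hbS
        have hsub : I.filter (fun v => v ∈ s(a, b)) ⊆ {a} := by
          intro x hx
          rcases Sym2.mem_iff.mp (Finset.mem_filter.mp hx).2 with rfl | rfl
          · exact Finset.mem_singleton_self x
          · exact absurd (Finset.mem_filter.mp hx).1 hbI
        have h1 : (I.filter (fun v => v ∈ s(a, b))).card ≤ 1 := by
          simpa using Finset.card_le_card hsub
        have h2 : 1 ≤ (S.toFinset.filter (fun v => v ∈ s(a, b))).card := by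
          refine Finset.card_pos.mpr ⟨b, Finset.mem_filter.mpr ⟨Set.mem_toFinset.mpr hbS, ?_⟩⟩
          exact Sym2.mem_mk_right a b
        exact h1.trans h2
      by_cases haI : a ∈ I
      · exact key a b hadj haI
      · by_cases hbI : b ∈ I
        · rw [Sym2.eq_swap]; exact key b a hadj.symm hbI
        · have : I.filter (fun v => v ∈ s(a, b)) = ∅ := by
            refine Finset.eq_empty_of_forall_notMem fun x hx => ?_
            rcases Sym2.mem_iff.mp (Finset.mem_filter.mp hx).2 with rfl | rfl
            · exact haI (Finset.mem_filter.mp hx).1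
            · exact hbI (Finset.mem_filter.mp hx).1
          rw [this]
          simp
  -- main chain of inequalities
  have main : (I.card : ℝ) ≤ (S.toFinset.card : ℝ) := by
    calc (I.card : ℝ) = ∑ v ∈ I, (1 : ℝ) := by simp
      _ = ∑ v ∈ I, ∑ e ∈ G.edgeFinset.filter (fun e => v ∈ e), f e := by
          exact Finset.sum_congr rfl fun v _ => (hdeg1 v).symm
      _ = ∑ e ∈ G.edgeFinset, ((I.filter (fun v => v ∈ e)).card : ℝ) * f e :=
          sum_swap_deg G I f
      _ ≤ ∑ e ∈ G.edgeFinset, ((S.toFinset.filter (fun v => v ∈ e)).card : ℝ) * f e := by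
          refine Finset.sum_le_sum fun e he => ?_
          exact mul_le_mul_of_nonneg_right (Nat.cast_le.mpr (hcard e he))
            (h01 e (mem_edgeFinset.mp he)).1
      _ = ∑ v ∈ S.toFinset, ∑ e ∈ G.edgeFinset.filter (fun e => v ∈ e), f e :=
          (sum_swap_deg G S.toFinset f).symm
      _ ≤ ∑ v ∈ S.toFinset, (1 : ℝ) := Finset.sum_le_sum fun v _ => hdeg v
      _ = (S.toFinset.card : ℝ) := by simp
  have hc : I.card ≤ S.toFinset.card := Nat.cast_le.mp main
  rw [isolCount_eq G S, Nat.card_eq_fintype_card, ← Set.toFinset_card]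
  exact hc

lemma hall_of_isol (h : ∀ S : Set V, isolCount G S ≤ Nat.card S) (A : Finset V) :
    A.card ≤ (A.biUnion (fun v => G.neighborFinset v)).card := by
  classical
  set N := A.biUnion (fun v => G.neighborFinset v) with hN
  set B := A \ N with hB
  set SB := B.biUnion (fun v => G.neighborFinset v) with hSB
  have hBsub : ∀ b ∈ B, b ∉ (SB : Set V) ∧ ∀ w, w ∉ (SB : Set V) → ¬ G.Adj b w := by
    intro b hb
    constructor
    · intro hbSB
      obtain ⟨b', hb', hmem⟩ := Finset.mem_biUnion.mp hbSB
      have : b ∈ N := Finset.mem_biUnion.mpr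
        ⟨b', (Finset.mem_sdiff.mp hb').1, hmem⟩
      exact (Finset.mem_sdiff.mp hb).2 this
    · intro w hw hadj
      exact hw (Finset.mem_biUnion.mpr ⟨b, hb, (G.mem_neighborFinset b w).mpr hadj⟩)
  have h1 : B.card ≤ isolCount G (SB : Set V) := by
    rw [isolCount_eq G (SB : Set V)]
    refine Finset.card_le_card fun b hb => Finset.mem_filter.mpr ⟨Finset.mem_univ b, hBsub b hb⟩
  have h2 : isolCount G (SB : Set V) ≤ Nat.card (SB : Set V) := h _
  have h3 : Nat.card (SB : Set V) = SB.card := by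
    rw [Nat.card_coe_set_eq, Set.ncard_coe_finset]
  have hBle : B.card ≤ SB.card := by omega
  have hSBN : SB ⊆ N := by
    intro x hx
    obtain ⟨b, hb, hmem⟩ := Finset.mem_biUnion.mp hx
    exact Finset.mem_biUnion.mpr ⟨b, (Finset.mem_sdiff.mp hb).1, hmem⟩
  have hdisj : Disjoint SB (A ∩ N) := by
    rw [Finset.disjoint_left]
    intro x hxSB hxAN
    obtain ⟨b, hbB, hxb⟩ := Finset.mem_biUnion.mp hxSB
    have hadj : G.Adj b x := (G.mem_neighborFinset b x).mp hxb
    have : b ∈ N := Finset.mem_biUnion.mpr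
      ⟨x, (Finset.mem_inter.mp hxAN).1, (G.mem_neighborFinset x b).mpr hadj.symm⟩
    exact (Finset.mem_sdiff.mp hbB).2 this
  calc A.card = (A \ N).card + (A ∩ N).card := (Finset.card_sdiff_add_card_inter A N).symm
    _ ≤ SB.card + (A ∩ N).card := Nat.add_le_add_right hBle _
    _ = (SB ∪ (A ∩ N)).card := (Finset.card_union_of_disjoint hdisj).symm
    _ ≤ N.card := Finset.card_le_card
        (Finset.union_subset hSBN (Finset.inter_subset_right))

lemma aux_backward (h : ∀ S : Set V, isolCount G S ≤ Nat.card S) :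
    ∃ f : Sym2 V → ℝ,
      (∀ e, e ∉ G.edgeSet → f e = 0) ∧
      (∀ e ∈ G.edgeSet, 0 ≤ f e ∧ f e ≤ 1) ∧
      (∀ v : V, ∑ e ∈ G.edgeFinset.filter (fun e => v ∈ e), f e ≤ 1) ∧
      (∑ e ∈ G.edgeFinset, f e = (Fintype.card V : ℝ) / 2) := by
  classical
  obtain ⟨φ, hinj, hφ⟩ := (Finset.all_card_le_biUnion_card_iff_existsInjective'
    (fun v => G.neighborFinset v)).mp (hall_of_isol G h)
  let σ : Equiv.Perm V := Equiv.ofBijective φ (Finite.injective_iff_bijective.mp hinj)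
  have hσ : ∀ v, G.Adj v (σ v) := fun v => (G.mem_neighborFinset v (φ v)).mp (hφ v)
  refine ⟨fun e => ((univ.filter (fun v => s(v, σ v) = e)).card : ℝ) / 2, ?_, ?_, ?_, ?_⟩
  · intro e he
    have : univ.filter (fun v => s(v, σ v) = e) = ∅ := by
      refine Finset.eq_empty_of_forall_notMem fun v hv => ?_
      have hev : s(v, σ v) = e := (Finset.mem_filter.mp hv).2
      exact he (hev ▸ (G.mem_edgeSet.mpr (hσ v)))
    simp only [this, Finset.card_empty, Nat.cast_zero, zero_div]
  · intro e he
    refine ⟨by positivity, ?_⟩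
    have hle : (univ.filter (fun v => s(v, σ v) = e)).card ≤ 2 := by
      induction e with
      | _ a b =>
        have hsub : univ.filter (fun v => s(v, σ v) = s(a, b)) ⊆ {a, b} := by
          intro x hx
          have : x ∈ s(a, b) := (Finset.mem_filter.mp hx).2 ▸ Sym2.mem_mk_left x (σ x)
          rcases Sym2.mem_iff.mp this with rfl | rfl <;> simp
        exact (Finset.card_le_card hsub).trans ((Finset.card_insert_le a {b}).trans (by simp))
    rw [div_le_one (by norm_num)]
    exact_mod_cast hle
  · intro v
    set T := univ.filter (fun u => v ∈ s(u, σ u)) with hT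
    have hfib : T.card = ∑ e ∈ G.edgeFinset.filter (fun e => v ∈ e),
        (T.filter (fun u => s(u, σ u) = e)).card := by
      refine Finset.card_eq_sum_card_fiberwise fun u hu => ?_
      refine Finset.mem_filter.mpr ⟨mem_edgeFinset.mpr (G.mem_edgeSet.mpr (hσ u)), ?_⟩
      exact (Finset.mem_filter.mp hu).2
    have hfilter_eq : ∀ e ∈ G.edgeFinset.filter (fun e => v ∈ e),
        univ.filter (fun u => s(u, σ u) = e) = T.filter (fun u => s(u, σ u) = e) := by
      intro e he
      ext u
      simp only [Finset.mem_filter, Finset.mem_univ, true_and, hT]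
      constructor
      · intro hu; exact ⟨hu ▸ (Finset.mem_filter.mp he).2, hu⟩
      · exact fun hu => hu.2
    have hTle : T.card ≤ 2 := by
      have hsub : T ⊆ {v, σ.symm v} := by
        intro u hu
        have := (Finset.mem_filter.mp hu).2
        rcases Sym2.mem_iff.mp this with h' | h'
        · simp [h']
        · have : u = σ.symm v := by
            rw [h']; exact (Equiv.symm_apply_apply σ u).symm
          simp [this]
      exact (Finset.card_le_card hsub).trans ((Finset.card_insert_le _ _).trans (by simp))
    calc ∑ e ∈ G.edgeFinset.filter (fun e => v ∈ e),
          ((univ.filter (fun u => s(u, σ u) = e)).card : ℝ) / 2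
        = ∑ e ∈ G.edgeFinset.filter (fun e => v ∈ e),
          ((T.filter (fun u => s(u, σ u) = e)).card : ℝ) / 2 := by
          refine Finset.sum_congr rfl fun e he => ?_
          rw [hfilter_eq e he]
      _ = (T.card : ℝ) / 2 := by
          rw [hfib]
          push_cast
          rw [Finset.sum_div]
      _ ≤ 1 := by
          rw [div_le_one (by norm_num)]
          exact_mod_cast hTle
  · have hfib : (univ : Finset V).card = ∑ e ∈ G.edgeFinset,
        (univ.filter (fun u => s(u, σ u) = e)).card := by
      refine Finset.card_eq_sum_card_fiberwise fun u _ => ?_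
      exact mem_edgeFinset.mpr (G.mem_edgeSet.mpr (hσ u))
    rw [← Finset.sum_div, ← Nat.cast_sum, ← hfib, Finset.card_univ]

end FPMaux

/-- A graph `G` has a fractional perfect matching iff `i(G - S) ≤ |S|` for every vertex subset
`S`. -/
theorem hasFPM_iff_isolCount
    {V : Type*} [Fintype V] (G : SimpleGraph V) :
    HasFPM G ↔ ∀ S : Set V, isolCount G S ≤ Nat.card S := by
  letI : DecidableEq V := Classical.decEq V
  letI : DecidableRel G.Adj := Classical.decRel _
  exact ⟨fun h S => FPMaux.aux_forward G h S, fun h => FPMaux.aux_backward G h⟩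
end

section
/- Let t ≥ 1 and n ≥ 3t+3 be integers. Then ρ(K_t ∇ (2K_1 ∪ K_{n−t−2})) < n − 2. -/
open SimpleGraph Matrix

/-- `Bg n t` is `K_t ∇ (2K_1 ∪ K_{n-t-2})`: vertices `0, …, t-1` form a dominating clique,
vertices `t` and `t+1` are joined only to them, and the remaining vertices form a clique. -/
def Bg (n t : ℕ) : SimpleGraph (Fin n) where
  Adj x y := x ≠ y ∧ (x.val < t ∨ y.val < t ∨ (t + 2 ≤ x.val ∧ t + 2 ≤ y.val))
  symm := by
    constructor
    rintro x y ⟨h1, h2⟩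
    exact ⟨Ne.symm h1, by tauto⟩
  loopless := by constructor; rintro x ⟨h1, -⟩; exact h1 rfl


/-!
Normalize an eigenvector `y` of a nonnegative eigenvalue `μ` so that its entry of largest
absolute value is `y v = 1`; then `μ ≤ deg v`. This settles the cases where `v` is one of the two
vertices of `2K_1` (degree `t`) or lies in `K_{n-t-2}` (degree `n - 3`). If `v` lies in `K_t`,
expanding the eigen-equation once more bounds `μ y` at the two vertices of `2K_1` by `t`, whence
`μ² ≤ 2t + (n - 3) μ`; this fails for `μ ≥ n - 2` because `n - 2 > 2t`. There are finitely many
eigenvalues, so the strict bound passes to their supremum.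
-/

open Finset

namespace Matrix

variable {ι : Type*} [Fintype ι]

theorem exists_eigenvector_apply_eq_one {A : Matrix ι ι ℝ} {μ : ℝ} {x : ι → ℝ} (hx : x ≠ 0)
    (h : A *ᵥ x = μ • x) : ∃ y : ι → ℝ, ∃ v, A *ᵥ y = μ • y ∧ y v = 1 ∧ ∀ u, |y u| ≤ 1 := by
  obtain ⟨u₀, hu₀⟩ := Function.ne_iff.1 hx
  have : Nonempty ι := ⟨u₀⟩
  obtain ⟨v, hv⟩ := Finite.exists_max (fun u => |x u|)
  have hxv : 0 < |x v| := (abs_pos.2 hu₀).trans_le (hv u₀)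
  refine ⟨(x v)⁻¹ • x, v, by rw [mulVec_smul, h, smul_comm], inv_mul_cancel₀ (abs_pos.1 hxv),
    fun u => ?_⟩
  rw [Pi.smul_apply, smul_eq_mul, abs_mul, abs_inv, inv_mul_le_one₀ hxv]
  exact hv u

end Matrix

namespace SimpleGraph

variable {V : Type*} [Fintype V] (G : SimpleGraph V) [DecidableRel G.Adj]

theorem specRad_lt_of_forall_lt {r : ℝ} (hr : 0 < r)
    (h : ∀ (μ : ℝ) (x : V → ℝ), x ≠ 0 → G.adjMatrix ℝ *ᵥ x = μ • x → μ < r) :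
    specRad G < r := by
  classical
  set S := {μ : ℝ | ∃ x : V → ℝ, x ≠ 0 ∧ G.adjMatrix ℝ *ᵥ x = μ • x}
  have hspec : specRad G = sSup S := by unfold specRad; congr!
  have hS : S.Finite := (Module.End.finite_hasEigenvalue (Matrix.toLin' (G.adjMatrix ℝ))).subset
    fun μ ⟨x, hx, hμ⟩ => Module.End.hasEigenvalue_of_hasEigenvector
      ⟨Module.End.mem_eigenspace_iff.2 (by rwa [Matrix.toLin'_apply]), hx⟩
  rcases S.eq_empty_or_nonempty with hSe | hSne
  · rwa [hspec, hSe, Real.sSup_empty]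
  · rw [hspec, hS.csSup_lt_iff hSne]
    rintro μ ⟨x, hx, hμ⟩
    exact h μ x hx hμ

variable {G} {μ : ℝ} {y : V → ℝ}

theorem sum_neighborFinset_eq_mul (hy : G.adjMatrix ℝ *ᵥ y = μ • y) (v : V) :
    ∑ w ∈ G.neighborFinset v, y w = μ * y v := by
  simpa [adjMatrix_mulVec_apply] using congrFun hy v

theorem mul_apply_le_degree (hy : G.adjMatrix ℝ *ᵥ y = μ • y) (hy1 : ∀ u, |y u| ≤ 1) (w : V) :
    μ * y w ≤ G.degree w := by
  rw [← sum_neighborFinset_eq_mul hy]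
  exact (sum_le_card_nsmul _ y 1 fun u _ => (abs_le.1 (hy1 u)).2).trans_eq (by simp)

theorem le_degree_of_apply_eq_one (hy : G.adjMatrix ℝ *ᵥ y = μ • y) (hy1 : ∀ u, |y u| ≤ 1) {v : V}
    (hv : y v = 1) : μ ≤ G.degree v := by
  simpa [hv] using mul_apply_le_degree hy hy1 v

theorem mul_self_le_of_subset_neighborFinset [DecidableEq V] (hy : G.adjMatrix ℝ *ᵥ y = μ • y)
    (hy1 : ∀ u, |y u| ≤ 1) {v : V} (hv : y v = 1) (hμ : 0 ≤ μ) {s : Finset V}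
    (hs : s ⊆ G.neighborFinset v) {d : ℕ} (hd : ∀ w ∈ s, G.degree w ≤ d) :
    μ * μ ≤ #s * d + μ * (G.degree v - #s) := by
  have h_s : ∑ w ∈ s, μ * y w ≤ #s * d := by
    simpa using sum_le_card_nsmul s _ (d : ℝ) fun w hw =>
      (mul_apply_le_degree hy hy1 w).trans (by exact_mod_cast hd w hw)
  have h_rest : ∑ w ∈ G.neighborFinset v \ s, y w ≤ (G.degree v - #s : ℝ) := by
    have := sum_le_card_nsmul (G.neighborFinset v \ s) y 1 fun u _ => (abs_le.1 (hy1 u)).2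
    rwa [card_sdiff_of_subset hs, card_neighborFinset_eq_degree, nsmul_one,
      Nat.cast_sub (card_le_card hs |>.trans_eq (card_neighborFinset_eq_degree G v))] at this
  calc μ * μ = μ * ∑ w ∈ G.neighborFinset v, y w := by
        rw [sum_neighborFinset_eq_mul hy, hv, mul_one]
    _ = ∑ w ∈ s, μ * y w + μ * ∑ w ∈ G.neighborFinset v \ s, y w := by
      rw [← sum_sdiff hs, mul_add, add_comm, mul_sum s]
    _ ≤ _ := add_le_add h_s (mul_le_mul_of_nonneg_left h_rest hμ)

end SimpleGraph

instance (n t : ℕ) : DecidableRel (Bg n t).Adj := fun x y => inferInstanceAs (Decidable (x ≠ y ∧ _))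

namespace Bg

variable {n t : ℕ}

@[simp]
theorem adj_iff {x y : Fin n} :
    (Bg n t).Adj x y ↔ x ≠ y ∧ (x.val < t ∨ y.val < t ∨ (t + 2 ≤ x.val ∧ t + 2 ≤ y.val)) :=
  Iff.rfl

def twoK1 (n t : ℕ) : Finset (Fin n) := {w | t ≤ w.val ∧ w.val < t + 2}

theorem card_twoK1 (h : t + 2 ≤ n) : #(twoK1 n t) = 2 := by
  have : (twoK1 n t).map Fin.valEmbedding = Ico t (t + 2) := by
    ext i
    simp only [twoK1, mem_map, mem_filter, mem_univ, true_and, Fin.valEmbedding_apply, mem_Ico]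
    exact ⟨fun ⟨w, hw, hwi⟩ => hwi ▸ hw, fun hi => ⟨⟨i, by omega⟩, hi, rfl⟩⟩
  rw [← card_map, this, Nat.card_Ico]
  omega

theorem neighborFinset_of_lt {v : Fin n} (hv : v.val < t) :
    (Bg n t).neighborFinset v = univ.erase v := by
  ext w
  simp [hv, eq_comm]

theorem degree_add_one_of_lt {v : Fin n} (hv : v.val < t) : (Bg n t).degree v + 1 = n := by
  rw [← card_neighborFinset_eq_degree, neighborFinset_of_lt hv, card_erase_add_one (mem_univ v),
    card_univ, Fintype.card_fin]

theorem twoK1_subset_neighborFinset {v : Fin n} (hv : v.val < t) :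
    twoK1 n t ⊆ (Bg n t).neighborFinset v := by
  intro w hw
  simp only [twoK1, mem_filter] at hw
  rw [neighborFinset_of_lt hv, mem_erase]
  exact ⟨fun h => by omega, mem_univ w⟩

theorem degree_of_mem_twoK1 {w : Fin n} (hw : w ∈ twoK1 n t) : (Bg n t).degree w = t := by
  simp only [twoK1, mem_filter, mem_univ, true_and] at hw
  have : (Bg n t).neighborFinset w = ({u | u.val < t} : Finset (Fin n)) := by
    ext u
    simp only [mem_neighborFinset, mem_filter, mem_univ, true_and, adj_iff]
    omega
  rw [← card_neighborFinset_eq_degree, this, Fin.card_filter_val_lt]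
  omega

theorem degree_add_three_le {v : Fin n} (hv : t + 2 ≤ v.val) : (Bg n t).degree v + 3 ≤ n := by
  have hsub : (Bg n t).neighborFinset v ⊆ univ.erase v \ twoK1 n t := by
    intro w hw
    simp only [mem_neighborFinset, adj_iff] at hw
    simp only [twoK1, mem_sdiff, mem_erase, mem_filter, mem_univ, true_and, and_true]
    exact ⟨Ne.symm hw.1, by omega⟩
  have hcard := card_le_card hsub
  have htwoK1 : twoK1 n t ⊆ univ.erase v := by
    intro w hw
    simp only [twoK1, mem_filter, mem_univ, true_and] at hw
    exact mem_erase.2 ⟨by rintro rfl; omega, mem_univ w⟩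
  rw [card_sdiff_of_subset htwoK1, card_twoK1 (by omega), card_erase_of_mem (mem_univ v),
    card_univ, Fintype.card_fin, card_neighborFinset_eq_degree] at hcard
  omega

end Bg

theorem spectralRadius_Bg_lt_general (n t : ℕ) (hn : 3 * t + 3 ≤ n) :
    specRad (Bg n t) < (n : ℝ) - 2 := by
  have hn' : (3 * t + 3 : ℝ) ≤ n := by exact_mod_cast hn
  refine (Bg n t).specRad_lt_of_forall_lt (by linarith) fun μ x hx hμx => ?_
  obtain ⟨y, v, hy, hyv, hy1⟩ := Matrix.exists_eigenvector_apply_eq_one hx hμx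
  rcases lt_or_ge μ 0 with hμ | hμ
  · linarith
  rcases lt_or_ge v.val t with hv | hv
  · have hμμ := mul_self_le_of_subset_neighborFinset hy hy1 hyv hμ
      (Bg.twoK1_subset_neighborFinset hv) fun w hw => (Bg.degree_of_mem_twoK1 hw).le
    have hdeg : ((Bg n t).degree v : ℝ) + 1 = n := by exact_mod_cast Bg.degree_add_one_of_lt hv
    rw [Bg.card_twoK1 (by omega), Nat.cast_ofNat] at hμμ
    by_contra! hμn
    nlinarith [mul_nonneg (sub_nonneg.2 hμn) hμ]
  rcases lt_or_ge v.val (t + 2) with hv' | hv'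
  · have hμt := le_degree_of_apply_eq_one hy hy1 hyv
    rw [Bg.degree_of_mem_twoK1 (by simp [Bg.twoK1, hv, hv'])] at hμt
    linarith
  · have hμd := le_degree_of_apply_eq_one hy hy1 hyv
    have hdeg : ((Bg n t).degree v : ℝ) + 3 ≤ n := by exact_mod_cast Bg.degree_add_three_le hv'
    linarith

/-- For `t ≥ 1` and `n ≥ 3t+3`, the spectral radius of `K_t ∇ (2K_1 ∪ K_{n-t-2})` is less than
`n - 2`. -/
theorem spectralRadius_Bg_lt
    (n t : ℕ) (ht : 1 ≤ t) (hn : 3 * t + 3 ≤ n) :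
    specRad (Bg n t) < (n : ℝ) - 2 :=
  spectralRadius_Bg_lt_general n t hn
end
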